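/- For every odd prime p (i.e., a prime p ≥ 3) and every integer n ≥ 0, the generalized Euler number satisfies the congruence ℰ_{pn}^{(p)} ≡ (-1)^n (mod 2p²). -/

import Mathlib

/-!
Writing `F = ∑ x^(pk)/(pk)!`, the identity `F⁻¹ * F = 1` gives, for `n ≥ 1`, the recurrence
`∑_{k ≤ n} C(pn, pk) ℰ_(pk) = 0` with leading coefficient `1`. By induction, `ℰ_(pn)` is an integer
and `ℰ_(pn) - (-1)^n` lies in `2p²ℤ`, as soon as every alternating row sum
`∑_{k ≤ n} (-1)^k C(pn, pk)` does. That sum vanishes modulo `p²` because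
`C(pn, pk) ≡ C(n, k) (mod p²)` and `∑ (-1)^k C(n, k) = 0`; it vanishes modulo `2` because the
involution `k ↦ n - k` pairs equal terms, its only possible fixed point contributing a central
binomial coefficient, which is even.
-/

/-- The generalized Euler number `ℰ_n^{(d)}`: `n!` times the coefficient of `x^n` in the
multiplicative inverse of the formal power series `∑_{k≥0} x^{dk}/(dk)!` over `ℚ`. -/
noncomputable def genEulerQ (d n : ℕ) : ℚ :=
  (n.factorial : ℚ) *
    PowerSeries.coeff (R := ℚ) n
      (PowerSeries.mk fun m => if d ∣ m then (1 : ℚ) / m.factorial else 0)⁻¹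

open Finset PowerSeries

namespace Nat

variable {p : ℕ} [hp : Fact p.Prime]

theorem prime_dvd_choose_mul_of_not_dvd (n : ℕ) {j : ℕ} (hj : ¬ p ∣ j) :
    p ∣ (p * n).choose j := by
  have h := Choose.choose_modEq_choose_mod_mul_choose_div_nat (n := p * n) (k := j) (p := p)
  rwa [mul_mod_right, choose_eq_zero_of_lt (pos_of_ne_zero (mt dvd_of_mod_eq_zero hj)), zero_mul,
    modEq_zero_iff_dvd] at h

/-- Vandermonde for `p (n + 1) = p + p n`: a term `C(p, i) C(p n, j)` with `0 < i < p` is divisible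
by `p²`, since then also `p ∤ j`. -/
theorem choose_mul_succ_mul_succ_modEq (n k : ℕ) :
    (p * (n + 1)).choose (p * (k + 1)) ≡
      (p * n).choose (p * k) + (p * n).choose (p * (k + 1)) [MOD p ^ 2] := by
  rw [← ZMod.natCast_eq_natCast_iff, show p * (n + 1) = p + p * n by ring, add_choose_eq,
    cast_sum, sum_eq_add_of_mem (p, p * k) (0, p * (k + 1)) (by simp; ring)
      (by simp) (by simp [hp.out.ne_zero])]
  · simp
  rintro ⟨i, j⟩ hij ⟨hip, hi0⟩
  rw [HasAntidiagonal.mem_antidiagonal] at hij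
  rcases lt_or_ge p i with hpi | hpi
  · simp [choose_eq_zero_of_lt hpi]
  have hi : 0 < i ∧ i < p := by
    constructor
    · by_contra! h
      exact hi0 (Prod.ext (by omega) (by simp only at hij ⊢; omega))
    · by_contra! h
      exact hip (Prod.ext (by omega) (by rw [mul_add_one] at hij; simp only at hij ⊢; omega))
  have hpj : ¬ p ∣ j := fun h ↦ not_dvd_of_pos_of_lt hi.1 hi.2 <|
    (Nat.dvd_add_left h).mp (hij ▸ dvd_mul_right p (k + 1))
  rw [ZMod.natCast_eq_zero_iff, sq]
  exact mul_dvd_mul (hp.out.dvd_choose_self hi.1.ne' hi.2) (prime_dvd_choose_mul_of_not_dvd n hpj)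

theorem choose_mul_mul_modEq_choose_sq (n k : ℕ) :
    (p * n).choose (p * k) ≡ n.choose k [MOD p ^ 2] := by
  induction n generalizing k with
  | zero =>
    cases k with
    | zero => rfl
    | succ k => simp [choose_eq_zero_of_lt (Nat.mul_pos hp.out.pos k.succ_pos), ModEq.refl]
  | succ n ih =>
    cases k with
    | zero => simp [ModEq.refl]
    | succ k =>
      rw [choose_succ_succ]
      exact (choose_mul_succ_mul_succ_modEq n k).trans ((ih k).add (ih (k + 1)))

theorem prime_sq_dvd_alternating_sum_choose_mul_mul {n : ℕ} (hn : n ≠ 0) :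
    (p ^ 2 : ℤ) ∣ ∑ k ∈ range (n + 1), (-1) ^ k * ((p * n).choose (p * k) : ℤ) := by
  have h := congrArg (Int.cast : ℤ → ZMod (p ^ 2)) (Int.alternating_sum_range_choose_of_ne hn)
  rw [Int.cast_zero] at h
  rw [← Int.natCast_pow, ← ZMod.intCast_zmod_eq_zero_iff_dvd, ← h]
  push_cast
  simp_rw [(ZMod.natCast_eq_natCast_iff _ _ _).mpr (choose_mul_mul_modEq_choose_sq n _)]

end Nat

theorem two_dvd_alternating_sum_choose_mul_mul {d n : ℕ} (hd : 0 < d) (hn : 0 < n) :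
    (2 : ℤ) ∣ ∑ k ∈ range (n + 1), (-1) ^ k * ((d * n).choose (d * k) : ℤ) := by
  rw [← Nat.cast_two, ← ZMod.intCast_zmod_eq_zero_iff_dvd]
  push_cast
  simp only [show (-1 : ZMod 2) = 1 from rfl, one_pow, one_mul]
  refine sum_involution (fun k _ ↦ n - k) (fun k hk ↦ ?_) (fun k hk hne hfix ↦ hne ?_)
    (fun k _ ↦ mem_range.mpr (by omega)) (fun k hk ↦ by simp at hk; omega)
  · have hk : d * k ≤ d * n := Nat.mul_le_mul_left d (by simpa [Nat.lt_succ_iff] using hk)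
    rw [Nat.mul_sub, Nat.choose_symm hk, CharTwo.add_self_eq_zero]
  · have hkn : n = 2 * k := by omega
    have hk : 0 < d * k := Nat.mul_pos hd (by omega)
    rw [ZMod.natCast_eq_zero_iff, hkn, mul_left_comm, ← Nat.centralBinom_eq_two_mul_choose]
    exact Nat.two_dvd_centralBinom_of_one_le hk

theorem Finset.sum_range_mul_add_one_eq_of_dvd {M : Type*} [AddCommMonoid M] {d : ℕ} (hd : 0 < d)
    (n : ℕ) {f : ℕ → M} (hf : ∀ j ≤ d * n, ¬ d ∣ j → f j = 0) :
    ∑ j ∈ range (d * n + 1), f j = ∑ k ∈ range (n + 1), f (d * k) := by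
  rw [← sum_image fun a _ b _ h ↦ Nat.eq_of_mul_eq_mul_left hd h]
  refine (sum_subset (fun j hj ↦ ?_) fun j hj hj' ↦ ?_).symm
  · obtain ⟨k, hk, rfl⟩ := mem_image.mp hj
    simp only [mem_range] at hk ⊢
    have := Nat.mul_le_mul_left d (Nat.lt_succ_iff.mp hk)
    omega
  · rw [mem_range] at hj
    refine hf j (by omega) fun ⟨k, hk⟩ ↦ hj' (mem_image.mpr ⟨k, ?_, hk.symm⟩)
    exact mem_range.mpr (Nat.lt_succ_of_le (Nat.le_of_mul_le_mul_left (by omega) hd))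

noncomputable def genCosh (d : ℕ) : PowerSeries ℚ :=
  mk fun m ↦ if d ∣ m then (1 : ℚ) / m.factorial else 0

theorem coeff_genCosh (d m : ℕ) :
    coeff m (genCosh d) = if d ∣ m then (1 : ℚ) / m.factorial else 0 :=
  coeff_mk _ _

theorem constantCoeff_genCosh (d : ℕ) : constantCoeff (genCosh d) = 1 := by
  simp [← coeff_zero_eq_constantCoeff_apply, coeff_genCosh]

theorem genEulerQ_eq_factorial_mul_coeff (d n : ℕ) :
    genEulerQ d n = n.factorial * coeff n (genCosh d)⁻¹ :=
  rfl

theorem genEulerQ_zero (d : ℕ) : genEulerQ d 0 = 1 := by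
  simp [genEulerQ_eq_factorial_mul_coeff, constantCoeff_genCosh]

theorem sum_range_choose_mul_genEulerQ_eq_zero {d n : ℕ} (hd : 0 < d) (hn : 0 < n) :
    ∑ k ∈ range (n + 1), ((d * n).choose (d * k) : ℚ) * genEulerQ d (d * k) = 0 := by
  have h : coeff (d * n) ((genCosh d)⁻¹ * genCosh d) = 0 := by
    rw [PowerSeries.inv_mul_cancel _ (by simp [constantCoeff_genCosh]), coeff_one,
      if_neg (by positivity)]
  rw [coeff_mul, Nat.sum_antidiagonal_eq_sum_range_succ_mk,
    sum_range_mul_add_one_eq_of_dvd hd n fun j hj hdj ↦ ?_] at h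
  · rw [← mul_zero ((d * n).factorial : ℚ), ← h, mul_sum]
    refine sum_congr rfl fun k hk ↦ ?_
    have hkn : d * k ≤ d * n := Nat.mul_le_mul_left d (Nat.lt_succ_iff.mp (mem_range.mp hk))
    have hfact := Nat.choose_mul_factorial_mul_factorial hkn
    rw [← Nat.mul_sub, coeff_genCosh, if_pos (dvd_mul_right _ _),
      genEulerQ_eq_factorial_mul_coeff, Nat.mul_sub, ← hfact]
    push_cast
    field_simp
  · rw [coeff_genCosh, if_neg fun h ↦ hdj ((Nat.dvd_sub_iff_right hj (dvd_mul_right d n)).mp h),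
      mul_zero]

theorem exists_intCast_modEq_neg_one_pow_of_sum_eq_zero {M : ℤ} {c : ℕ → ℕ → ℤ} {a : ℕ → ℚ}
    (h0 : a 0 = 1) (hc : ∀ n, c n n = 1)
    (hrec : ∀ n, 0 < n → ∑ k ∈ range (n + 1), (c n k : ℚ) * a k = 0)
    (hM : ∀ n, 0 < n → M ∣ ∑ k ∈ range (n + 1), (-1) ^ k * c n k) (n : ℕ) :
    ∃ z : ℤ, a n = z ∧ z ≡ (-1) ^ n [ZMOD M] := by
  suffices h : ∀ n, a n - (-1) ^ n ∈ AddSubgroup.zmultiples (M : ℚ) by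
    obtain ⟨w, hw⟩ := AddSubgroup.mem_zmultiples_iff.mp (h n)
    refine ⟨(-1) ^ n + M * w, ?_, Int.add_mul_emod_self_left _ _ _⟩
    rw [zsmul_eq_mul] at hw
    push_cast
    linarith
  intro n
  induction n using Nat.strong_induction_on with
  | _ n ih =>
  rcases n.eq_zero_or_pos with rfl | hn
  · simp [h0]
  have hsplit : a n - (-1) ^ n = -∑ k ∈ range n, (c n k : ℚ) * (a k - (-1) ^ k) -
      ((∑ k ∈ range (n + 1), (-1) ^ k * c n k : ℤ) : ℚ) := by
    have h := hrec n hn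
    rw [sum_range_succ, hc, Int.cast_one, one_mul] at h
    push_cast
    rw [sum_range_succ, hc]
    simp only [mul_sub, sum_sub_distrib, mul_comm ((-1 : ℚ) ^ _)]
    push_cast
    linarith
  obtain ⟨t, ht⟩ := hM n hn
  rw [hsplit]
  refine sub_mem (neg_mem (sum_mem fun k hk ↦ ?_)) (AddSubgroup.mem_zmultiples_iff.mpr
    ⟨t, by rw [ht, zsmul_eq_mul]; push_cast; ring⟩)
  rw [← zsmul_eq_mul]
  exact AddSubgroup.zsmul_mem _ (ih k (mem_range.mp hk)) _

theorem stmt_13 (p n : ℕ) (hp : p.Prime) (hp3 : 3 ≤ p) :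
    ∃ z : ℤ, genEulerQ p (p * n) = (z : ℚ) ∧ z ≡ (-1) ^ n [ZMOD (2 * p ^ 2)] := by
  have : Fact p.Prime := ⟨hp⟩
  have hcop : IsCoprime (2 : ℤ) ((p : ℤ) ^ 2) :=
    (Nat.isCoprime_iff_coprime.mpr ((Nat.coprime_primes Nat.prime_two hp).mpr (by omega))).pow_right
  refine exists_intCast_modEq_neg_one_pow_of_sum_eq_zero (c := fun n k ↦ (p * n).choose (p * k))
    (a := fun n ↦ genEulerQ p (p * n)) (by simp [genEulerQ_zero]) (by simp) (fun m hm ↦ ?_)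
    (fun m hm ↦ ?_) n
  · exact_mod_cast sum_range_choose_mul_genEulerQ_eq_zero hp.pos hm
  · exact hcop.mul_dvd (two_dvd_alternating_sum_choose_mul_mul hp.pos hm)
      (Nat.prime_sq_dvd_alternating_sum_choose_mul_mul hm.ne')
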